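/- For every integer m ≥ 1 and every real k with 0 < k ≤ m, the function r ↦ J_m(k r)²/r is non-decreasing on the interval (0, 1]. -/

import Mathlib

open MeasureTheory Filter Set

/-- The Bessel function of the first kind of order `ν`:
`J_ν(x) = ∑ₖ (-1)^k / (k! Γ(ν+k+1)) (x/2)^(2k+ν)`. -/
noncomputable def besselJ (ν : ℝ) (x : ℝ) : ℝ :=
  ∑' k : ℕ, ((-1 : ℝ) ^ k / ((k.factorial : ℝ) * Real.Gamma (ν + (k : ℝ) + 1))) *
    (x / 2) ^ (2 * (k : ℝ) + ν)

/-- The derivative `J_ν'` of the Bessel function. -/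
noncomputable def besselJDeriv (ν : ℝ) (x : ℝ) : ℝ := deriv (besselJ ν) x

/-- `besselJZero ν s` is the `s`-th positive zero of `J_ν` (for `s ≥ 1`),
listed in increasing order. -/
noncomputable def besselJZero (ν : ℝ) : ℕ → ℝ
  | 0 => 0
  | s + 1 => sInf {x : ℝ | besselJZero ν s < x ∧ besselJ ν x = 0}

/-- `besselJPrimeZero ν s` is the `s`-th positive zero of `J_ν'` (for `s ≥ 1`),
listed in increasing order. -/
noncomputable def besselJPrimeZero (ν : ℝ) : ℕ → ℝ
  | 0 => 0
  | s + 1 => sInf {x : ℝ | besselJPrimeZero ν s < x ∧ besselJDeriv ν x = 0}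

/-!
Write `J_n(x) = (x/2)^n g_n((x/2)^2)` with the entire function
`g_n(t) = ∑ⱼ (-1)^j t^j / (j! (n+j)!)`. Then `J_{n+1}(x)^2 / x = s^(2n+1) g_{n+1}(s^2)^2 / 2`
with `s = x/2`, and since `g_n' = -g_{n+1}` the `s`-derivative of `s^(2n+1) g_{n+1}(s^2)^2` is
`s^(2n) g_{n+1} ((2n+1) g_{n+1} - 4 s^2 g_{n+2})`. The bracket is nonnegative for `4 s^2 ≤ (n+1)^2`
thanks to the ratio bound `(n+1) g_{n+1}(t) ≤ 2 g_n(t)` (that is, `J_{n+1}/J_n ≤ x/(n+1)`), valid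
for `4t ≤ (n+1)(n+2)`: for `2t ≤ n+1` it follows from the two-term alternating-series bounds on
`g_n` and `g_{n+1}`, and it propagates downwards in `n` through the recurrence
`g_n = (n+1) g_{n+1} - t g_{n+2}`. Finally `J_m(kr)^2/r = k · J_m(kr)^2/(kr)` with `kr ∈ (0, m]`.
-/

open Nat

noncomputable def besselCoeff (n j : ℕ) : ℝ := (-1) ^ j / (j ! * (n + j) !)

noncomputable def reducedBessel (n : ℕ) (t : ℝ) : ℝ := ∑' j, besselCoeff n j * t ^ j

section ExpDominatedPowerSeries

variable {a : ℕ → ℝ}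

theorem summable_mul_pow_of_abs_le_inv_factorial (ha : ∀ j, |a j| ≤ 1 / j !) (t : ℝ) :
    Summable fun j => a j * t ^ j := by
  refine .of_norm_bounded (Real.summable_pow_div_factorial |t|) fun j => ?_
  rw [Real.norm_eq_abs, abs_mul, abs_pow, div_eq_mul_one_div, mul_comm (|t| ^ j)]
  gcongr
  exact ha j

theorem hasDerivAt_tsum_mul_pow_of_abs_le_inv_factorial (ha : ∀ j, |a j| ≤ 1 / j !) (t : ℝ) :
    HasDerivAt (fun y => ∑' j, a j * y ^ j) (∑' j, (j + 1) * a (j + 1) * t ^ j) t := by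
  set R := |t| + 1
  have hR : 1 ≤ R := by simp [R]
  have htR : t ∈ Ioo (-R) R := by
    constructor <;> linarith [neg_abs_le t, le_abs_self t]
  have hbound : ∀ j, ∀ y ∈ Ioo (-R) R, ‖a j * (j * y ^ (j - 1))‖ ≤ (2 * R) ^ j / j ! := by
    intro j y hy
    have hyR : |y| ≤ R := abs_le.2 ⟨hy.1.le, hy.2.le⟩
    calc ‖a j * (j * y ^ (j - 1))‖ = |a j| * (j * |y| ^ (j - 1)) := by simp
      _ ≤ 1 / j ! * (2 ^ j * R ^ j) := by
          gcongr
          · exact ha j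
          · exact_mod_cast Nat.lt_two_pow_self.le
          · exact (pow_le_pow_left₀ (abs_nonneg y) hyR _).trans
              (pow_le_pow_right₀ hR (Nat.sub_le j 1))
      _ = (2 * R) ^ j / j ! := by rw [mul_pow]; ring
  have hderiv := hasDerivAt_tsum_of_isPreconnected (Real.summable_pow_div_factorial (2 * R))
    isOpen_Ioo (convex_Ioo (-R) R).isPreconnected
    (fun j y _ => (hasDerivAt_pow j y).const_mul (a j)) hbound htR
    (summable_mul_pow_of_abs_le_inv_factorial ha t) htR
  have hsum : Summable fun j => a j * (j * t ^ (j - 1)) :=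
    .of_norm_bounded (Real.summable_pow_div_factorial (2 * R)) fun j => hbound j t htR
  refine hderiv.congr_deriv ?_
  rw [hsum.tsum_eq_zero_add]
  simp only [CharP.cast_eq_zero, zero_mul, mul_zero, zero_add, Nat.cast_add, Nat.cast_one,
    add_tsub_cancel_right]
  exact tsum_congr fun j => by ring

end ExpDominatedPowerSeries

theorem abs_besselCoeff_le (n j : ℕ) : |besselCoeff n j| ≤ 1 / j ! := by
  rw [besselCoeff, abs_div, abs_pow, abs_neg, abs_one, one_pow, abs_of_pos (by positivity)]
  gcongr
  exact_mod_cast Nat.le_mul_of_pos_right _ (Nat.factorial_pos _)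

theorem succ_mul_besselCoeff_succ (n j : ℕ) :
    (j + 1) * besselCoeff n (j + 1) = -besselCoeff (n + 1) j := by
  simp only [besselCoeff, show n + (j + 1) = n + 1 + j by omega, Nat.factorial_succ]
  push_cast
  field_simp
  ring

theorem besselCoeff_eq_mul_besselCoeff_succ (n j : ℕ) :
    besselCoeff n j = (n + j + 1) * besselCoeff (n + 1) j := by
  simp only [besselCoeff, show n + 1 + j = n + j + 1 by omega, Nat.factorial_succ]
  push_cast
  field_simp

theorem summable_besselCoeff_mul_pow (n : ℕ) (t : ℝ) :
    Summable fun j => besselCoeff n j * t ^ j :=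
  summable_mul_pow_of_abs_le_inv_factorial (abs_besselCoeff_le n) t

theorem hasDerivAt_reducedBessel (n : ℕ) (t : ℝ) :
    HasDerivAt (reducedBessel n) (-reducedBessel (n + 1) t) t := by
  refine (hasDerivAt_tsum_mul_pow_of_abs_le_inv_factorial (abs_besselCoeff_le n) t).congr_deriv ?_
  simp only [succ_mul_besselCoeff_succ, neg_mul, tsum_neg, reducedBessel]

theorem reducedBessel_eq_sub (n : ℕ) (t : ℝ) :
    reducedBessel n t = (n + 1) * reducedBessel (n + 1) t - t * reducedBessel (n + 2) t := by
  have hshift : ∀ j : ℕ, ((j + 1 : ℕ) : ℝ) * besselCoeff (n + 1) (j + 1) * t ^ (j + 1)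
      = -t * (besselCoeff (n + 2) j * t ^ j) := fun j => by
    push_cast
    rw [succ_mul_besselCoeff_succ]
    ring
  have hsum : Summable fun j : ℕ => (j : ℝ) * besselCoeff (n + 1) j * t ^ j := by
    rw [← summable_nat_add_iff 1]
    simpa only [hshift] using (summable_besselCoeff_mul_pow (n + 2) t).mul_left (-t)
  calc reducedBessel n t
      = ∑' j : ℕ, ((n + 1) * (besselCoeff (n + 1) j * t ^ j)
          + (j : ℝ) * besselCoeff (n + 1) j * t ^ j) := by
        refine tsum_congr fun j => ?_
        rw [besselCoeff_eq_mul_besselCoeff_succ]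
        ring
    _ = (n + 1) * reducedBessel (n + 1) t + ∑' j : ℕ, -t * (besselCoeff (n + 2) j * t ^ j) := by
        rw [((summable_besselCoeff_mul_pow (n + 1) t).mul_left _).tsum_add hsum, tsum_mul_left,
          hsum.tsum_eq_zero_add]
        simp only [hshift, CharP.cast_eq_zero, zero_mul, zero_add, reducedBessel]
    _ = (n + 1) * reducedBessel (n + 1) t - t * reducedBessel (n + 2) t := by
        rw [tsum_mul_left]
        show _ + -t * reducedBessel (n + 2) t = _
        ring

theorem reducedBessel_mem_Icc (n : ℕ) {t : ℝ} (ht₀ : 0 ≤ t) (ht : t ≤ n + 1) :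
    reducedBessel n t ∈ Icc (1 / (n ! : ℝ) - t / ((n + 1) ! : ℝ)) (1 / (n ! : ℝ)) := by
  set f : ℕ → ℝ := fun j => t ^ j / (j ! * (n + j) !)
  have hf : ∀ j, 0 ≤ f j := fun j => by positivity
  have hsucc : ∀ j, f (j + 1) = f j * (t / ((j + 1) * (n + j + 1))) := fun j => by
    simp only [f, show n + (j + 1) = n + j + 1 by omega, Nat.factorial_succ, pow_succ]
    push_cast
    field_simp
  have hanti : Antitone f := antitone_nat_of_succ_le fun j => by
    rw [hsucc]
    refine mul_le_of_le_one_right (hf j) (div_le_one_of_le₀ ?_ (by positivity))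
    nlinarith [(j.cast_nonneg : (0 : ℝ) ≤ j)]
  have hsum : Summable f := by
    refine .of_nonneg_of_le hf (fun j => ?_) (Real.summable_pow_div_factorial t)
    refine div_le_div_of_nonneg_left (by positivity) (by positivity) ?_
    exact le_mul_of_one_le_right (by positivity)
      (by exact_mod_cast Nat.one_le_iff_ne_zero.2 (Nat.factorial_ne_zero _))
  have hg : reducedBessel n t = ∑' j, (-1) ^ j * f j :=
    tsum_congr fun j => by simp only [besselCoeff, f]; ring
  have hlim := hg ▸ hsum.tendsto_alternating_series_tsum
  have hupper := hanti.tendsto_le_alternating_series hlim 0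
  have hlower := hanti.alternating_series_le_tendsto hlim 1
  simp [Finset.sum_range_succ, f] at hupper hlower
  exact ⟨by simpa [sub_le_iff_le_add] using hlower, by simpa using hupper⟩

theorem reducedBessel_succ_pos_and_le_of_two_mul_le {n : ℕ} {t : ℝ} (ht₀ : 0 ≤ t)
    (ht : 2 * t ≤ n + 1) :
    0 < reducedBessel (n + 1) t ∧ (n + 1) * reducedBessel (n + 1) t ≤ 2 * reducedBessel n t := by
  obtain ⟨hlower, -⟩ := reducedBessel_mem_Icc n ht₀ (by linarith)
  obtain ⟨hlower', hupper'⟩ := reducedBessel_mem_Icc (n + 1) ht₀ (by push_cast; linarith)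
  simp only [Nat.factorial_succ] at hlower hlower' hupper'
  push_cast at hlower hlower' hupper'
  rw [show 1 / (n ! : ℝ) - t / ((n + 1) * n !) = (n + 1 - t) / ((n + 1) * n !) by
    field_simp] at hlower
  rw [show 1 / ((n + 1) * n ! : ℝ) - t / ((n + 1 + 1) * ((n + 1) * n !))
      = (n + 2 - t) / ((n + 2) * ((n + 1) * n !)) by field_simp; ring] at hlower'
  constructor
  · exact lt_of_lt_of_le (div_pos (by linarith) (by positivity)) hlower'
  · calc (n + 1) * reducedBessel (n + 1) t ≤ (n + 1) * (1 / ((n + 1) * n !)) := by gcongr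
      _ ≤ 2 * ((n + 1 - t) / ((n + 1) * n !)) := by
        rw [← mul_div_assoc, ← mul_div_assoc, mul_one]
        gcongr
        linarith
      _ ≤ 2 * reducedBessel n t := by gcongr

theorem reducedBessel_succ_pos_and_le_of_succ {n : ℕ} {t : ℝ} (ht₀ : 0 ≤ t)
    (ht : 4 * t ≤ (n + 1) * (n + 2)) (hpos : 0 < reducedBessel (n + 2) t)
    (hle : (n + 2) * reducedBessel (n + 2) t ≤ 2 * reducedBessel (n + 1) t) :
    0 < reducedBessel (n + 1) t ∧ (n + 1) * reducedBessel (n + 1) t ≤ 2 * reducedBessel n t := by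
  have hpos' : 0 < reducedBessel (n + 1) t := by nlinarith
  refine ⟨hpos', ?_⟩
  have key : (n + 2) * (2 * t * reducedBessel (n + 2) t)
      ≤ (n + 2) * ((n + 1) * reducedBessel (n + 1) t) := by
    nlinarith [mul_le_mul_of_nonneg_left hle (by linarith : 0 ≤ 2 * t),
      mul_le_mul_of_nonneg_right ht hpos'.le]
  have := le_of_mul_le_mul_left key (by positivity)
  rw [reducedBessel_eq_sub n t]
  linarith

theorem reducedBessel_succ_pos_and_le {n : ℕ} {t : ℝ} (ht₀ : 0 ≤ t)
    (ht : 4 * t ≤ (n + 1) * (n + 2)) :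
    0 < reducedBessel (n + 1) t ∧ (n + 1) * reducedBessel (n + 1) t ≤ 2 * reducedBessel n t := by
  refine Nat.decreasingInduction' (P := fun k => 0 < reducedBessel (k + 1) t ∧
      (k + 1) * reducedBessel (k + 1) t ≤ 2 * reducedBessel k t)
    (fun k _ hnk ⟨hpos, hle⟩ => ?_) (Nat.le_add_right n ⌈2 * t⌉₊) ?_
  · have hnk' : (n : ℝ) ≤ k := by exact_mod_cast hnk
    push_cast at hle
    refine reducedBessel_succ_pos_and_le_of_succ ht₀ ?_ hpos (by linarith)
    nlinarith
  · refine reducedBessel_succ_pos_and_le_of_two_mul_le ht₀ ?_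
    push_cast
    linarith [Nat.le_ceil (2 * t), (n.cast_nonneg : (0 : ℝ) ≤ n)]

theorem reducedBessel_succ_pos_and_four_mul_le {n : ℕ} {t : ℝ} (ht₀ : 0 ≤ t)
    (ht : 4 * t ≤ (n + 1) ^ 2) :
    0 < reducedBessel (n + 1) t ∧
      4 * t * reducedBessel (n + 2) t ≤ (2 * n + 1) * reducedBessel (n + 1) t := by
  obtain ⟨hpos, hle⟩ := reducedBessel_succ_pos_and_le (n := n + 1) ht₀ (by push_cast; nlinarith)
  push_cast at hle
  have hpos' : 0 < reducedBessel (n + 1) t := by nlinarith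
  refine ⟨hpos', le_of_mul_le_mul_left ?_ (by positivity : (0 : ℝ) < n + 2)⟩
  nlinarith [mul_le_mul_of_nonneg_right ht hpos.le,
    mul_le_mul_of_nonneg_left hle (sq_nonneg ((n : ℝ) + 1))]

theorem monotoneOn_pow_mul_reducedBessel_sq (n : ℕ) :
    MonotoneOn (fun s : ℝ => s ^ (2 * n + 1) * reducedBessel (n + 1) (s ^ 2) ^ 2)
      (Icc 0 ((n + 1) / 2)) := by
  have hderiv : ∀ s : ℝ,
      HasDerivAt (fun s : ℝ => s ^ (2 * n + 1) * reducedBessel (n + 1) (s ^ 2) ^ 2)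
        (s ^ (2 * n) * reducedBessel (n + 1) (s ^ 2) * ((2 * n + 1) * reducedBessel (n + 1) (s ^ 2)
          - 4 * s ^ 2 * reducedBessel (n + 2) (s ^ 2))) s := by
    intro s
    have hg := ((hasDerivAt_reducedBessel (n + 1) (s ^ 2)).comp s (hasDerivAt_pow 2 s)).pow 2
    refine ((hasDerivAt_pow (2 * n + 1) s).mul hg).congr_deriv ?_
    simp only [Pi.pow_apply, Function.comp_apply]
    push_cast
    ring
  refine monotoneOn_of_hasDerivWithinAt_nonneg (convex_Icc _ _)
    (fun s _ => (hderiv s).continuousAt.continuousWithinAt)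
    (fun s _ => (hderiv s).hasDerivWithinAt) fun s hs => ?_
  rw [interior_Icc] at hs
  obtain ⟨hpos, hle⟩ :=
    reducedBessel_succ_pos_and_four_mul_le (n := n) (sq_nonneg s) (by nlinarith [hs.1, hs.2])
  have := pow_pos hs.1 (2 * n)
  exact mul_nonneg (by positivity) (by linarith)

theorem besselJ_natCast_eq (n : ℕ) (x : ℝ) :
    besselJ n x = (x / 2) ^ n * reducedBessel n ((x / 2) ^ 2) := by
  rw [besselJ, reducedBessel, ← tsum_mul_left]
  refine tsum_congr fun j => ?_
  rw [show (n : ℝ) + j + 1 = ((n + j : ℕ) : ℝ) + 1 by push_cast; ring, Real.Gamma_nat_eq_factorial,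
    show 2 * (j : ℝ) + n = ((2 * j + n : ℕ) : ℝ) by push_cast; ring, Real.rpow_natCast,
    besselCoeff, pow_add, pow_mul]
  ring

theorem besselJ_succ_sq_div_eq (n : ℕ) (x : ℝ) :
    besselJ ((n + 1 : ℕ) : ℝ) x ^ 2 / x
      = (x / 2) ^ (2 * n + 1) * reducedBessel (n + 1) ((x / 2) ^ 2) ^ 2 / 2 := by
  rcases eq_or_ne x 0 with rfl | hx
  · simp
  rw [besselJ_natCast_eq]
  field_simp
  ring

theorem monotoneOn_besselJ_succ_sq_div (n : ℕ) :
    MonotoneOn (fun x => besselJ ((n + 1 : ℕ) : ℝ) x ^ 2 / x) (Icc 0 (n + 1)) := by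
  intro a ha b hb hab
  have hhalf : ∀ x ∈ Icc (0 : ℝ) (n + 1), x / 2 ∈ Icc (0 : ℝ) ((n + 1) / 2) :=
    fun x hx => ⟨by linarith [hx.1], by linarith [hx.2]⟩
  simp only [besselJ_succ_sq_div_eq]
  gcongr ?_ / 2
  exact monotoneOn_pow_mul_reducedBessel_sq n (hhalf a ha) (hhalf b hb) (by linarith)

/-- For every integer `m ≥ 1` and every `0 < k ≤ m`, the function
`r ↦ J_m(kr)²/r` is non-decreasing on `(0, 1]`. -/
theorem stmt11 (m : ℕ) (hm : 1 ≤ m) (k : ℝ) (hk0 : 0 < k) (hk : k ≤ (m:ℝ)) :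
    MonotoneOn (fun r : ℝ => (besselJ m (k * r)) ^ 2 / r) (Set.Ioc (0:ℝ) 1) := by
  obtain ⟨n, rfl⟩ : ∃ n, m = n + 1 := ⟨m - 1, by omega⟩
  push_cast at hk
  have hscale : ∀ r ∈ Ioc (0 : ℝ) 1, k * r ∈ Icc (0 : ℝ) (n + 1) := fun r hr =>
    ⟨by positivity [hr.1], by nlinarith [hr.1, hr.2]⟩
  have hrescale : ∀ r : ℝ, 0 < r → besselJ ((n + 1 : ℕ) : ℝ) (k * r) ^ 2 / r
      = k * (besselJ ((n + 1 : ℕ) : ℝ) (k * r) ^ 2 / (k * r)) := fun r hr => by field_simp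
  intro a ha b hb hab
  simp only [hrescale a ha.1, hrescale b hb.1]
  exact mul_le_mul_of_nonneg_left
    (monotoneOn_besselJ_succ_sq_div n (hscale a ha) (hscale b hb) (by gcongr)) hk0.le
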